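/- arXiv:1608.04270 — 2 statements merged into one kernel-verified Lean document; each statement's English description precedes it below -/
import Mathlib

section
/- Let U be a domain in ℝⁿ (n ≥ 2) with U ≠ ℝⁿ. Then the set of supports {p x̃ : x̃ ∈ ∂_H U} is dense in the Euclidean boundary ∂U with respect to the Euclidean metric. -/
open Set Metric Filter

noncomputable section

/-- Euclidean `n`-space. -/
abbrev Euc (n : ℕ) := EuclideanSpace ℝ (Fin n)

/-- A domain: a nonempty open connected subset of Euclidean space. -/
def IsEucDomain {n : ℕ} (U : Set (Euc n)) : Prop := IsOpen U ∧ IsConnected U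

/-- Intrinsic extended distance inside `S`: the infimum of the lengths (total
variations) of continuous paths joining `x` and `y` within `S`. -/
def intrinsicDist {n : ℕ} (S : Set (Euc n)) (x y : Euc n) : ENNReal :=
  ⨅ (γ : ℝ → Euc n) (_ : ContinuousOn γ (Icc (0:ℝ) 1)) (_ : γ 0 = x) (_ : γ 1 = y)
    (_ : MapsTo γ (Icc (0:ℝ) 1) S), eVariationOn γ (Icc (0:ℝ) 1)

/-- A Cauchy sequence (in the intrinsic metric) of points of `U` that does not
converge (in the intrinsic metric) to a point of `U`; such sequences represent
elements of the Hausdorff boundary of `U`. -/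
structure HBSeq {n : ℕ} (U : Set (Euc n)) where
  seq : ℕ → Euc n
  mem : ∀ k, seq k ∈ U
  cauchy : ∀ ε : ENNReal, 0 < ε → ∃ N : ℕ, ∀ j ≥ N, ∀ k ≥ N,
    intrinsicDist U (seq j) (seq k) < ε
  notConv : ¬ ∃ u ∈ U, Tendsto (fun k => intrinsicDist U (seq k) u) atTop (nhds 0)

/-- Two Cauchy sequences represent the same Hausdorff-boundary element iff the
intrinsic distance between corresponding terms tends to `0`. -/
def HBEquiv {n : ℕ} (U : Set (Euc n)) (s t : HBSeq U) : Prop :=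
  Tendsto (fun k => intrinsicDist U (s.seq k) (t.seq k)) atTop (nhds 0)

/-- The Hausdorff boundary of `U`: points of the completion of `(U, ρ_U)` not
corresponding to points of `U`. -/
def HausdorffBoundary {n : ℕ} (U : Set (Euc n)) : Type := Quot (HBEquiv U)

/-- The relative metric on the Hausdorff boundary (the completion metric). -/
def hbDist {n : ℕ} {U : Set (Euc n)} (a b : HausdorffBoundary U) : ENNReal :=
  limsup (fun k => intrinsicDist U ((Quot.out a).seq k) ((Quot.out b).seq k)) atTop

/-- The support of a Hausdorff-boundary element: the Euclidean limit of a
representing Cauchy sequence. -/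
def hbSupport {n : ℕ} {U : Set (Euc n)} (a : HausdorffBoundary U) : Euc n :=
  limUnder atTop (Quot.out a).seq

/-- A (bijective) isometry of Hausdorff boundaries in the relative metrics. -/
def IsHBIsometry {n : ℕ} {U V : Set (Euc n)}
    (f : HausdorffBoundary U → HausdorffBoundary V) : Prop :=
  Function.Bijective f ∧ ∀ a b : HausdorffBoundary U, hbDist (f a) (f b) = hbDist a b

/-- `U` is uniquely determined in the class `𝒰` by the relative metric of its
Hausdorff boundary: any member of `𝒰` with Hausdorff boundary isometric (in the
relative metrics) to that of `U` is the image of `U` under a Euclidean isometry. -/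
def UniquelyDeterminedIn {n : ℕ} (𝒰 : Set (Set (Euc n))) (U : Set (Euc n)) : Prop :=
  ∀ V ∈ 𝒰, (∃ f : HausdorffBoundary U → HausdorffBoundary V, IsHBIsometry f) →
    ∃ J : Euc n ≃ᵢ Euc n, J '' U = V

/-! Given `x ∈ ∂U` and `y ∈ U` close to `x`, follow the segment from `y` to `x` up to the first
point `z` outside `U`. Any two points of the half-open segment `[y, z)` are joined by a segment
inside `U`, so there the intrinsic distance is at most the Euclidean one. A sequence on `[y, z)`
converging to `z` is therefore intrinsically Cauchy, has no intrinsic limit in `U`, and so defines a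
Hausdorff-boundary point with support `z`; finally `‖x - z‖ ≤ ‖x - y‖`. -/

open Topology

theorem exists_first_exit {X : Type*} [TopologicalSpace X] {U : Set X} (hU : IsOpen U)
    {γ : ℝ → X} (hγ : Continuous γ) (h0 : γ 0 ∈ U) (h1 : γ 1 ∉ U) :
    ∃ t₀ ∈ Ioc (0 : ℝ) 1, γ t₀ ∉ U ∧ Ico 0 t₀ ⊆ γ ⁻¹' U := by
  set S := Icc (0 : ℝ) 1 ∩ γ ⁻¹' Uᶜ
  have hS : BddBelow S := ⟨0, fun t ht => ht.1.1⟩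
  have hmem : sInf S ∈ S :=
    (isClosed_Icc.inter (hU.isClosed_compl.preimage hγ)).csInf_mem
      ⟨1, right_mem_Icc.2 zero_le_one, h1⟩ hS
  have hbefore : Ico 0 (sInf S) ⊆ γ ⁻¹' U := fun t ⟨ht0, ht⟩ => by
    by_contra hγt
    exact (csInf_le hS ⟨⟨ht0, ht.le.trans hmem.1.2⟩, hγt⟩).not_gt ht
  have hpos : 0 < sInf S := hmem.1.1.lt_of_ne fun h => hmem.2 (h ▸ h0)
  exact ⟨sInf S, ⟨hpos, hmem.1.2⟩, hmem.2, hbefore⟩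

theorem exists_first_exit_on_segment {E : Type*} [NormedAddCommGroup E] [NormedSpace ℝ E]
    {U : Set E} (hU : IsOpen U) {x y : E} (hy : y ∈ U) (hx : x ∉ U) :
    ∃ z ∈ segment ℝ y x, z ∉ U ∧
      ∃ u : ℕ → E, (∀ j k, segment ℝ (u j) (u k) ⊆ U) ∧ Tendsto u atTop (𝓝 z) := by
  set γ : ℝ →ᵃ[ℝ] E := AffineMap.lineMap y x
  have hγ : Continuous γ := AffineMap.lineMap_continuous
  obtain ⟨t₀, ht₀, hγt₀, hbefore⟩ :=
    exists_first_exit hU hγ (by simpa [γ] using hy) (by simpa [γ] using hx)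
  obtain ⟨τ, -, hτ, hτt₀⟩ := exists_seq_strictMono_tendsto' ht₀.1
  refine ⟨γ t₀, lineMap_mem_segment ℝ y x (Ioc_subset_Icc_self ht₀), hγt₀, γ ∘ τ, ?_,
    (hγ.tendsto t₀).comp hτt₀⟩
  intro j k
  rw [Function.comp_apply, Function.comp_apply, ← image_segment, image_subset_iff]
  exact ((convex_Ico 0 t₀).segment_subset (Ioo_subset_Ico_self (hτ j))
    (Ioo_subset_Ico_self (hτ k))).trans hbefore

section IntrinsicDist

variable {n : ℕ}

theorem edist_le_intrinsicDist (S : Set (Euc n)) (x y : Euc n) :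
    edist x y ≤ intrinsicDist S x y := by
  refine le_iInf fun γ => le_iInf fun _ => le_iInf fun h0 => le_iInf fun h1 => le_iInf fun _ => ?_
  simpa only [h0, h1] using eVariationOn.edist_le γ (left_mem_Icc.2 zero_le_one)
    (right_mem_Icc.2 (zero_le_one' ℝ))

theorem intrinsicDist_le_edist_of_segment_subset {S : Set (Euc n)} {x y : Euc n}
    (h : segment ℝ x y ⊆ S) : intrinsicDist S x y ≤ edist x y := by
  set γ : ℝ →ᵃ[ℝ] Euc n := AffineMap.lineMap x y
  calc intrinsicDist S x y ≤ eVariationOn γ (Icc 0 1) :=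
        iInf₂_le_of_le γ AffineMap.lineMap_continuous.continuousOn <|
          iInf₂_le_of_le (AffineMap.lineMap_apply_zero x y) (AffineMap.lineMap_apply_one x y) <|
            iInf_le _ fun t ht => h (lineMap_mem_segment ℝ x y ht)
    _ ≤ nndist x y * eVariationOn id (Icc (0 : ℝ) 1) :=
        (lipschitzWith_lineMap x y).lipschitzOnWith.comp_eVariationOn_le (mapsTo_id _)
    _ = edist x y := by simp [eVariationOn_id_Icc]

theorem tendsto_edist_of_tendsto_intrinsicDist {ι : Type*} {l : Filter ι} {S : Set (Euc n)}
    {f g : ι → Euc n} (h : Tendsto (fun i => intrinsicDist S (f i) (g i)) l (𝓝 0)) :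
    Tendsto (fun i => edist (f i) (g i)) l (𝓝 0) :=
  tendsto_of_tendsto_of_tendsto_of_le_of_le tendsto_const_nhds h (fun _ => zero_le)
    fun _ => edist_le_intrinsicDist S _ _

end IntrinsicDist

namespace HBSeq

variable {n : ℕ} {U : Set (Euc n)}

def ofSegmentSubset (u : ℕ → Euc n) (hu : ∀ j k, segment ℝ (u j) (u k) ⊆ U) {z : Euc n}
    (hz : Tendsto u atTop (𝓝 z)) (hzU : z ∉ U) : HBSeq U where
  seq := u
  mem k := hu k k (left_mem_segment ℝ _ _)
  cauchy ε hε := by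
    obtain ⟨N, hN⟩ := EMetric.cauchySeq_iff.1 hz.cauchySeq ε hε
    exact ⟨N, fun j hj k hk =>
      (intrinsicDist_le_edist_of_segment_subset (hu j k)).trans_lt (hN j hj k hk)⟩
  notConv := fun ⟨w, hwU, hw⟩ => hzU <| tendsto_nhds_unique
    (tendsto_iff_edist_tendsto_0.2 (tendsto_edist_of_tendsto_intrinsicDist hw)) hz ▸ hwU

theorem tendsto_iff_of_eqvGen {s t : HBSeq U} (h : Relation.EqvGen (HBEquiv U) s t)
    {z : Euc n} : Tendsto s.seq atTop (𝓝 z) ↔ Tendsto t.seq atTop (𝓝 z) := by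
  induction h with
  | rel s t hst =>
    refine tendsto_iff_of_dist ?_
    simpa only [Function.comp_def, dist_edist, ENNReal.toReal_zero] using
      (ENNReal.tendsto_toReal ENNReal.zero_ne_top).comp (tendsto_edist_of_tendsto_intrinsicDist hst)
  | refl => rfl
  | symm _ _ _ ih => exact ih.symm
  | trans _ _ _ _ _ ih₁ ih₂ => exact ih₁.trans ih₂

end HBSeq

theorem hbSupport_mk {n : ℕ} {U : Set (Euc n)} {s : HBSeq U} {z : Euc n}
    (hs : Tendsto s.seq atTop (𝓝 z)) : hbSupport (Quot.mk (HBEquiv U) s) = z :=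
  ((HBSeq.tendsto_iff_of_eqvGen (Quot.eqvGen_exact (Quot.out_eq _))).2 hs).limUnder_eq

theorem supports_dense_in_frontier_general
    (n : ℕ) (U : Set (Euc n)) (hU : IsEucDomain U) :
    frontier U ⊆ closure (range (fun a : HausdorffBoundary U => hbSupport a)) := by
  intro x hx
  rw [hU.1.frontier_eq] at hx
  refine Metric.mem_closure_iff.2 fun ε hε => ?_
  obtain ⟨y, hyU, hxy⟩ := Metric.mem_closure_iff.1 hx.1 ε hε
  obtain ⟨z, hz, hzU, u, hu, huz⟩ := exists_first_exit_on_segment hU.1 hyU hx.2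
  refine ⟨z, ⟨Quot.mk _ (HBSeq.ofSegmentSubset u hu huz hzU), hbSupport_mk huz⟩, ?_⟩
  calc dist x z ≤ dist x y := by
        rw [dist_comm x z, dist_comm x y, ← dist_add_dist_of_mem_segment hz]
        exact le_add_of_nonneg_left dist_nonneg
    _ < ε := hxy

/-- Lemma 2.1: the supports of Hausdorff-boundary elements are dense in the
Euclidean boundary of `U`. -/
theorem supports_dense_in_frontier
    (n : ℕ) (hn : 2 ≤ n) (U : Set (Euc n)) (hU : IsEucDomain U) (hne : U ≠ univ) :
    frontier U ⊆ closure (range (fun a : HausdorffBoundary U => hbSupport a)) :=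
  supports_dense_in_frontier_general n U hU
end
end

section
/- Let Y ⊆ ℝⁿ (n ≥ 2) be an n-dimensional compact connected topological (C⁰) manifold with nonempty boundary, embedded in ℝⁿ (so Int Y is open in ℝⁿ), satisfying condition (i), and assume the function ρ_Y is a metric on Y. Then any two points x, y ∈ Y can be joined in Y by a shortest curve in the metric ρ_Y: there exists a continuous curve γ : [0,L] → Y with L = ρ_Y(x,y), γ(0) = x, γ(L) = y, and ρ_Y(γ(s), γ(t)) = t − s for all s, t ∈ [0,L] with s < t. -/
/-!
Approximate `ρ_Y(x, y) = L` by paths in `Int Y` of length less than `L + 1/k` between points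
`1/k`-close to `x` and `y`. Reparametrized by arc length (and frozen once the length is used up)
these are `1`-Lipschitz maps `ℝ → Int Y`, and since `Y` is compact they have a pointwise limit `γ`
along an ultrafilter: a `1`-Lipschitz curve in `Y` with `γ 0 = x` and `γ L = y`. Each subarc
`γ|[s, t]` is the limit of interior paths of length at most `t - s`, so `ρ_Y(γ s, γ t) ≤ t - s`
straight from the definition of `ρ_Y` as a liminf; the triangle inequality along
`x, γ s, γ t, y` then forces equality.
-/

open Set Metric Filter

noncomputable section

/-- The closed half-space `{v : x₀(v) ≥ 0}` in Euclidean `n`-space. -/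
def closedHalfSpace (n : ℕ) (hn : 0 < n) : Set (Euc n) := {v | 0 ≤ v ⟨0, hn⟩}

/-- The manifold interior of `Y ⊆ ℝⁿ`: points having a neighborhood in `Y`
homeomorphic to an open subset of `ℝⁿ`. -/
def mInterior (n : ℕ) (Y : Set (Euc n)) : Set (Euc n) :=
  {x | x ∈ Y ∧ ∃ N : Set (Euc n), N ∈ nhdsWithin x Y ∧ N ⊆ Y ∧
    ∃ O : Set (Euc n), IsOpen O ∧ Nonempty (↥N ≃ₜ ↥O)}

/-- `Y ⊆ ℝⁿ` is a topological (`C⁰`) `n`-manifold with boundary: every point has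
a neighborhood in `Y` homeomorphic to an open subset of the closed half-space. -/
def IsC0ManifoldWithBoundary (n : ℕ) (hn : 0 < n) (Y : Set (Euc n)) : Prop :=
  ∀ x ∈ Y, ∃ N : Set (Euc n), N ∈ nhdsWithin x Y ∧ N ⊆ Y ∧
    ∃ O : Set (Euc n), (∃ O' : Set (Euc n), IsOpen O' ∧ O = O' ∩ closedHalfSpace n hn) ∧
      Nonempty (↥N ≃ₜ ↥O)

/-- `ρ_Y(x,y)`: the liminf, over `x' → x`, `y' → y` with `x', y'` in the manifold
interior of `Y`, of the infimum of lengths of paths joining `x'` and `y'` within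
the manifold interior of `Y`. -/
def rhoY (n : ℕ) (Y : Set (Euc n)) (x y : Euc n) : ENNReal :=
  liminf (fun p : Euc n × Euc n => intrinsicDist (mInterior n Y) p.1 p.2)
    ((nhdsWithin x (mInterior n Y)) ×ˢ (nhdsWithin y (mInterior n Y)))

open scoped NNReal ENNReal Topology

theorem HasConstantSpeedOnWith.lipschitzOnWith {E : Type*} [PseudoEMetricSpace E]
    {f : ℝ → E} {s : Set ℝ} {l : ℝ≥0} (h : HasConstantSpeedOnWith f s l) :
    LipschitzOnWith l f s := by
  suffices key : ∀ x ∈ s, ∀ y ∈ s, x ≤ y → edist (f x) (f y) ≤ l * edist x y by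
    intro x hx y hy
    rcases le_total x y with hxy | hyx
    · exact key x hx y hy hxy
    · rw [edist_comm, edist_comm x]; exact key y hy x hx hyx
  intro x hx y hy hxy
  calc edist (f x) (f y) ≤ eVariationOn f (s ∩ Icc x y) :=
        eVariationOn.edist_le f ⟨hx, le_rfl, hxy⟩ ⟨hy, hxy, le_rfl⟩
    _ = l * edist x y := by
        rw [h hx hy, edist_dist, Real.dist_eq, abs_sub_comm, abs_of_nonneg (sub_nonneg.2 hxy),
          ENNReal.ofReal_mul (NNReal.coe_nonneg l), ENNReal.ofReal_coe_nnreal]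

theorem BoundedVariationOn.continuousOn_variationOnFromTo {α E : Type*} [LinearOrder α]
    [TopologicalSpace α] [OrderTopology α] [PseudoEMetricSpace E] {f : α → E} {s : Set α}
    (hf : BoundedVariationOn f s) (hc : ContinuousOn f s) {a : α} (ha : a ∈ s) :
    ContinuousOn (variationOnFromTo f s a) s := by
  intro x hx
  have hsplit : ∀ y ∈ s, variationOnFromTo f s a y =
      variationOnFromTo f s a x + variationOnFromTo f s x y := fun y hy =>
    (variationOnFromTo.add hf.locallyBoundedVariationOn ha hx hy).symm
  have hbound : ∀ y, |variationOnFromTo f s x y| ≤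
      (eVariationOn f (s ∩ Icc y x)).toReal + (eVariationOn f (s ∩ Icc x y)).toReal := by
    intro y
    rcases le_total x y with hxy | hyx
    · rw [variationOnFromTo.eq_of_le f s hxy, ENNReal.abs_toReal]
      exact le_add_of_nonneg_left ENNReal.toReal_nonneg
    · rw [variationOnFromTo.eq_of_ge f s hyx, abs_neg, ENNReal.abs_toReal]
      exact le_add_of_nonneg_right ENNReal.toReal_nonneg
  have hsmall : Tendsto (fun y => (eVariationOn f (s ∩ Icc y x)).toReal +
      (eVariationOn f (s ∩ Icc x y)).toReal) (𝓝[s] x) (𝓝 0) := by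
    simpa using ((ENNReal.tendsto_toReal ENNReal.zero_ne_top).comp
      (hf.tendsto_eVariationOn_Icc_zero_left ((hc x hx).mono inter_subset_left))).add
      ((ENNReal.tendsto_toReal ENNReal.zero_ne_top).comp
      (hf.tendsto_eVariationOn_Icc_zero_right x ((hc x hx).mono inter_subset_left)))
  have hlim : Tendsto (variationOnFromTo f s x) (𝓝[s] x) (𝓝 0) :=
    squeeze_zero_norm hbound hsmall
  have hshift := (tendsto_const_nhds (x := variationOnFromTo f s a x)).add hlim
  rw [add_zero] at hshift
  exact hshift.congr' (eventually_nhdsWithin_of_forall fun y hy => (hsplit y hy).symm)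

theorem BoundedVariationOn.exists_lipschitzWith_one_reparam {E : Type*} [MetricSpace E]
    {f : ℝ → E} {a b : ℝ} (hf : BoundedVariationOn f (Icc a b)) (hc : ContinuousOn f (Icc a b))
    (hab : a ≤ b) :
    ∃ g : ℝ → E, LipschitzWith 1 g ∧ g 0 = f a ∧
      (∀ t, (eVariationOn f (Icc a b)).toReal ≤ t → g t = f b) ∧ range g ⊆ f '' Icc a b := by
  set s := Icc a b
  set V := (eVariationOn f s).toReal
  set φ := variationOnFromTo f s a
  have has : a ∈ s := left_mem_Icc.2 hab
  have hbs : b ∈ s := right_mem_Icc.2 hab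
  have hφa : φ a = 0 := variationOnFromTo.self f s a
  have hφb : φ b = V := by
    change variationOnFromTo f s a b = _
    rw [variationOnFromTo.eq_of_le f s hab, inter_self]
  have himage : φ '' s = Icc 0 V := by
    refine (image_subset_iff.2 fun t ht => ?_).antisymm ?_
    · have hmono := variationOnFromTo.monotoneOn hf.locallyBoundedVariationOn has
      exact ⟨hφa ▸ hmono has ht ht.1, hφb ▸ hmono ht hbs ht.2⟩
    · have hivt : Icc (φ a) (φ b) ⊆ φ '' s :=
        intermediate_value_Icc hab (hf.continuousOn_variationOnFromTo hc has)
      rwa [hφa, hφb] at hivt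
  set g₀ := naturalParameterization f s a
  have hg₀ : LipschitzOnWith 1 g₀ (Icc 0 V) := himage ▸
    (has_unit_speed_naturalParameterization f hf.locallyBoundedVariationOn has).lipschitzOnWith
  have hg₀φ : ∀ t ∈ s, g₀ (φ t) = f t := fun t ht =>
    edist_eq_zero.1 (edist_naturalParameterization_eq_zero hf.locallyBoundedVariationOn has ht)
  have hV : 0 ≤ V := ENNReal.toReal_nonneg
  refine ⟨IccExtend hV ((Icc 0 V).domRestrict g₀), ?_, ?_, fun t ht => ?_, ?_⟩
  · have h := hg₀.to_restrict.comp (LipschitzWith.projIcc hV)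
    rwa [one_mul] at h
  · rw [IccExtend_left, domRestrict_apply]
    simpa only [hφa] using hg₀φ a has
  · rw [IccExtend_of_right_le _ _ ht, domRestrict_apply]
    simpa only [hφb] using hg₀φ b hbs
  · rw [IccExtend_range, range_domRestrict, ← himage, image_image]
    rintro _ ⟨t, ht, rfl⟩
    exact ⟨t, ht, (hg₀φ t ht).symm⟩

theorem eq_ofReal_sub_of_le_of_triangle {X : Type*} {Y : Set X} {d : X → X → ℝ≥0∞}
    (htri : ∀ x ∈ Y, ∀ y ∈ Y, ∀ z ∈ Y, d x z ≤ d x y + d y z) {γ : ℝ → X} {L : ℝ}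
    (hγY : MapsTo γ (Icc 0 L) Y)
    (hshort : ∀ s ∈ Icc 0 L, ∀ t ∈ Icc 0 L, s ≤ t → d (γ s) (γ t) ≤ ENNReal.ofReal (t - s))
    (hlong : ENNReal.ofReal L ≤ d (γ 0) (γ L)) :
    ∀ s ∈ Icc 0 L, ∀ t ∈ Icc 0 L, s ≤ t → d (γ s) (γ t) = ENNReal.ofReal (t - s) := by
  intro s hs t ht hst
  have h0 : (0 : ℝ) ∈ Icc 0 L := left_mem_Icc.2 (hs.1.trans hs.2)
  have hL : L ∈ Icc 0 L := right_mem_Icc.2 (hs.1.trans hs.2)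
  refine le_antisymm (hshort s hs t ht hst) ?_
  have hsplit : ENNReal.ofReal L =
      ENNReal.ofReal s + ENNReal.ofReal (t - s) + ENNReal.ofReal (L - t) := by
    rw [← ENNReal.ofReal_add hs.1 (sub_nonneg.2 hst),
      ← ENNReal.ofReal_add (by linarith [hs.1]) (sub_nonneg.2 ht.2)]
    ring_nf
  have hchain : ENNReal.ofReal L ≤
      ENNReal.ofReal s + d (γ s) (γ t) + ENNReal.ofReal (L - t) :=
    calc ENNReal.ofReal L ≤ d (γ 0) (γ L) := hlong
      _ ≤ d (γ 0) (γ s) + d (γ s) (γ t) + d (γ t) (γ L) := by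
          rw [add_assoc]
          grw [htri _ (hγY h0) _ (hγY hs) _ (hγY hL), htri _ (hγY hs) _ (hγY ht) _ (hγY hL)]
      _ ≤ ENNReal.ofReal s + d (γ s) (γ t) + ENNReal.ofReal (L - t) := by
          gcongr
          · simpa using hshort 0 h0 s hs hs.1
          · exact hshort t ht L hL ht.2
  rw [hsplit] at hchain
  exact (ENNReal.add_le_add_iff_left ENNReal.ofReal_ne_top).1
    ((ENNReal.add_le_add_iff_right ENNReal.ofReal_ne_top).1 hchain)

section Intrinsic

variable {n : ℕ}

theorem intrinsicDist_le_of_lipschitzOnWith {S : Set (Euc n)} {f : ℝ → Euc n} {C : ℝ≥0}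
    {a b : ℝ} (hab : a ≤ b) (hf : LipschitzOnWith C f (Icc a b)) (hS : MapsTo f (Icc a b) S) :
    intrinsicDist S (f a) (f b) ≤ C * ENNReal.ofReal (b - a) := by
  set φ : ℝ → ℝ := fun u => a + u * (b - a)
  have hφ : MonotoneOn φ (Icc 0 1) := fun u _ v _ huv => by
    simp only [φ]; nlinarith [sub_nonneg.2 hab]
  have hφI : MapsTo φ (Icc 0 1) (Icc a b) := fun u hu => by
    simp only [φ, mem_Icc] at hu ⊢; constructor <;> nlinarith [sub_nonneg.2 hab]
  have hpath : intrinsicDist S (f a) (f b) ≤ eVariationOn (f ∘ φ) (Icc 0 1) :=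
    iInf₂_le_of_le (f ∘ φ) ((hf.continuousOn).comp (by fun_prop) hφI) <|
      iInf₂_le_of_le (by simp [φ]) (by simp [φ]) <| iInf_le_of_le (hS.comp hφI) le_rfl
  calc intrinsicDist S (f a) (f b) ≤ eVariationOn (f ∘ φ) (Icc 0 1) := hpath
    _ ≤ C * eVariationOn φ (Icc 0 1) := hf.comp_eVariationOn_le hφI
    _ = C * ENNReal.ofReal (b - a) := by
        rw [← inter_self (Icc (0:ℝ) 1), hφ.eVariationOn_eq (left_mem_Icc.2 zero_le_one)
          (right_mem_Icc.2 zero_le_one)]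
        simp [φ]

theorem exists_lipschitzWith_one_of_intrinsicDist_lt {S : Set (Euc n)} {p q : Euc n} {ℓ : ℝ}
    (h : intrinsicDist S p q < ENNReal.ofReal ℓ) :
    ∃ g : ℝ → Euc n, LipschitzWith 1 g ∧ g 0 = p ∧ g ℓ = q ∧ range g ⊆ S := by
  simp only [intrinsicDist, iInf_lt_iff] at h
  obtain ⟨σ, hσc, rfl, rfl, hσS, hσvar⟩ := h
  obtain ⟨g, hg, hg0, hg1, hgσ⟩ :=
    BoundedVariationOn.exists_lipschitzWith_one_reparam (hσvar.trans ENNReal.ofReal_lt_top).ne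
      hσc zero_le_one
  exact ⟨g, hg, hg0, hg1 ℓ (ENNReal.toReal_lt_of_lt_ofReal hσvar).le,
    hgσ.trans (image_subset_iff.2 hσS)⟩

end Intrinsic

section Rho

variable {n : ℕ} {Y : Set (Euc n)}

theorem rhoY_le_of_tendsto {ι : Type*} {l : Filter ι} [l.NeBot] {P Q : ι → Euc n}
    {p q : Euc n} {c : ℝ≥0∞} (hPY : ∀ i, P i ∈ mInterior n Y) (hQY : ∀ i, Q i ∈ mInterior n Y)
    (hP : Tendsto P l (𝓝 p)) (hQ : Tendsto Q l (𝓝 q))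
    (hle : ∀ᶠ i in l, intrinsicDist (mInterior n Y) (P i) (Q i) ≤ c) :
    rhoY n Y p q ≤ c := by
  have hPQ : Tendsto (fun i => (P i, Q i)) l
      (𝓝[mInterior n Y] p ×ˢ 𝓝[mInterior n Y] q) :=
    (tendsto_nhdsWithin_iff.2 ⟨hP, .of_forall hPY⟩).prodMk
      (tendsto_nhdsWithin_iff.2 ⟨hQ, .of_forall hQY⟩)
  exact liminf_le_of_frequently_le' (hPQ.frequently hle.frequently)

theorem exists_lipschitzWith_one_near_of_rhoY_le {x y : Euc n} {L ε : ℝ} (hL : 0 ≤ L)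
    (hρ : rhoY n Y x y ≤ ENNReal.ofReal L) (hε : 0 < ε) :
    ∃ g : ℝ → Euc n, LipschitzWith 1 g ∧ range g ⊆ mInterior n Y ∧
      dist (g 0) x < ε ∧ dist (g L) y < ε := by
  have hlt : rhoY n Y x y < ENNReal.ofReal (L + ε / 2) :=
    hρ.trans_lt ((ENNReal.ofReal_lt_ofReal_iff (by positivity)).2 (by linarith))
  have hnear : ((mInterior n Y ∩ ball x (ε / 2)) ×ˢ (mInterior n Y ∩ ball y (ε / 2))) ∈
      𝓝[mInterior n Y] x ×ˢ 𝓝[mInterior n Y] y :=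
    prod_mem_prod (inter_mem_nhdsWithin _ (ball_mem_nhds _ (by positivity)))
      (inter_mem_nhdsWithin _ (ball_mem_nhds _ (by positivity)))
  obtain ⟨⟨p, q⟩, hpq, ⟨-, hpx⟩, ⟨-, hqy⟩⟩ :=
    ((frequently_lt_of_liminf_lt (by isBoundedDefault) hlt).and_eventually hnear).exists
  obtain ⟨g, hg, rfl, hgq, hgS⟩ := exists_lipschitzWith_one_of_intrinsicDist_lt hpq
  refine ⟨g, hg, hgS, (mem_ball.1 hpx).trans (half_lt_self hε), ?_⟩
  calc dist (g L) y ≤ dist (g L) (g (L + ε / 2)) + dist q y := hgq ▸ dist_triangle _ _ _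
    _ < ε / 2 + ε / 2 := by
        refine add_lt_add_of_le_of_lt ?_ hqy
        simpa [abs_of_pos hε] using hg.dist_le_mul L (L + ε / 2)
    _ = ε := add_halves ε

theorem exists_lipschitzWith_one_rhoY_le (hY : IsCompact Y) {x y : Euc n} {L : ℝ}
    (hL : 0 ≤ L) (hρ : rhoY n Y x y ≤ ENNReal.ofReal L) :
    ∃ γ : ℝ → Euc n, LipschitzWith 1 γ ∧ (∀ t, γ t ∈ Y) ∧ γ 0 = x ∧ γ L = y ∧
      ∀ s t, s ≤ t → rhoY n Y (γ s) (γ t) ≤ ENNReal.ofReal (t - s) := by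
  choose g hg hgY hg0 hgL using fun k : ℕ =>
    exists_lipschitzWith_one_near_of_rhoY_le hL hρ (Nat.one_div_pos_of_nat (n := k))
  have hIntY : mInterior n Y ⊆ Y := fun z hz => hz.1
  have hK : IsCompact (closure (mInterior n Y)) := hY.closure_of_subset hIntY
  let U : Ultrafilter ℕ := Ultrafilter.of atTop
  obtain ⟨γ, hγK, hlim⟩ := (isCompact_univ_pi fun _ : ℝ => hK).ultrafilter_le_nhds (U.map g) <| by
    rw [Ultrafilter.coe_map, le_principal_iff]
    exact mem_map.2 (univ_mem' fun k t _ => subset_closure (hgY k (mem_range_self t)))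
  rw [Ultrafilter.coe_map] at hlim
  have hpt : ∀ t, Tendsto (fun k => g k t) U (𝓝 (γ t)) := tendsto_pi_nhds.1 hlim
  have hnear : ∀ {z : ℕ → Euc n} {w : Euc n}, (∀ k, dist (z k) w < 1 / ((k : ℝ) + 1)) →
      Tendsto z U (𝓝 w) := fun hz =>
    (tendsto_iff_dist_tendsto_zero.2 (squeeze_zero (fun _ => dist_nonneg) (fun k => (hz k).le)
      tendsto_one_div_add_atTop_nhds_zero_nat)).mono_left (Ultrafilter.of_le _)
  refine ⟨γ, (isClosed_setOfPred_lipschitzWith 1).mem_of_tendsto hlim (.of_forall hg),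
    fun t => closure_minimal hIntY hY.isClosed (hγK t trivial),
    tendsto_nhds_unique (hpt 0) (hnear hg0), tendsto_nhds_unique (hpt L) (hnear hgL),
    fun s t hst => ?_⟩
  refine rhoY_le_of_tendsto (fun k => hgY k (mem_range_self s))
    (fun k => hgY k (mem_range_self t)) (hpt s) (hpt t) (.of_forall fun k => ?_)
  simpa using intrinsicDist_le_of_lipschitzOnWith hst (hg k).lipschitzOnWith
    (fun u _ => hgY k (mem_range_self u))

end Rho

/-- Theorem 3.3 (Euclidean case): if `ρ_Y` is a (finite) metric on a compact
connected `C⁰` `n`-manifold with nonempty boundary `Y ⊆ ℝⁿ` (with open manifold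
interior), then any two points of `Y` are joined in `Y` by a shortest curve in
the metric `ρ_Y`. -/
theorem rhoY_shortest_curve_exists
    (n : ℕ) (Y : Set (Euc n))
    (hcomp : IsCompact Y)
    (hfin : ∀ x ∈ Y, ∀ y ∈ Y, rhoY n Y x y < ⊤)
    (htri : ∀ x ∈ Y, ∀ y ∈ Y, ∀ z ∈ Y, rhoY n Y x z ≤ rhoY n Y x y + rhoY n Y y z) :
    ∀ x ∈ Y, ∀ y ∈ Y, ∃ (L : ℝ) (γ : ℝ → Euc n), 0 ≤ L ∧
      ENNReal.ofReal L = rhoY n Y x y ∧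
      ContinuousOn γ (Icc (0:ℝ) L) ∧ MapsTo γ (Icc (0:ℝ) L) Y ∧
      γ 0 = x ∧ γ L = y ∧
      ∀ s ∈ Icc (0:ℝ) L, ∀ t ∈ Icc (0:ℝ) L, s < t →
        rhoY n Y (γ s) (γ t) = ENNReal.ofReal (t - s) := by
  intro x hx y hy
  set L := (rhoY n Y x y).toReal
  have hL : ENNReal.ofReal L = rhoY n Y x y := ENNReal.ofReal_toReal (hfin x hx y hy).ne
  obtain ⟨γ, hγ, hγY, hγ0, hγL, hγρ⟩ :=
    exists_lipschitzWith_one_rhoY_le hcomp ENNReal.toReal_nonneg hL.ge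
  have hgeod := eq_ofReal_sub_of_le_of_triangle (L := L) htri (fun t _ => hγY t)
    (fun s _ t _ hst => hγρ s t hst) (by rw [hγ0, hγL, hL])
  exact ⟨L, γ, ENNReal.toReal_nonneg, hL, hγ.continuous.continuousOn, fun t _ => hγY t, hγ0, hγL,
    fun s hs t ht hst => hgeod s hs t ht hst.le⟩
end
end
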